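/- Let G be a strongly connected digraph with start vertex s, and suppose a strong bridge e separates vertices x and y (i.e., x and y are in different strongly connected components of G\e). Then e appears in at least one of the four dominator-tree paths: D[s,x], D[s,y], D^R[s,x], D^R[s,y]. -/

import Mathlib

namespace StrongConn

variable {V : Type*}

/-- `p` is a walk in the digraph `G` from `u` to `v`, recorded as the list of visited vertices. -/
def IsWalk (G : V → V → Prop) (u v : V) (p : List V) : Prop :=
  p.Chain' G ∧ p.head? = some u ∧ p.getLast? = some v

/-- The directed edge `(a,b)` occurs on the walk `p`. -/
def EdgeOn (a b : V) (p : List V) : Prop := (a, b) ∈ p.zip p.tail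

/-- `v` is reachable from `u` in `G`. -/
def Reach (G : V → V → Prop) (u v : V) : Prop := ∃ p, IsWalk G u v p

/-- `u` and `v` are strongly connected in `G`. -/
def SConn (G : V → V → Prop) (u v : V) : Prop := Reach G u v ∧ Reach G v u

def StronglyConnected (G : V → V → Prop) : Prop := ∀ u v, Reach G u v

/-- `G` with the edge `(a,b)` deleted. -/
def DelEdge (G : V → V → Prop) (a b : V) : V → V → Prop :=
  fun x y => G x y ∧ ¬(x = a ∧ y = b)

/-- `G` with the vertex `u` (and all incident edges) deleted. -/
def DelVertex (G : V → V → Prop) (u : V) : V → V → Prop :=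
  fun x y => G x y ∧ x ≠ u ∧ y ≠ u

/-- `C` is a strongly connected component of `G`. -/
def IsSCC (G : V → V → Prop) (C : Set V) : Prop :=
  C.Nonempty ∧ (∀ x ∈ C, ∀ y ∈ C, SConn G x y) ∧ ∀ x ∈ C, ∀ y, SConn G x y → y ∈ C

/-- `(a,b)` is a strong bridge: an edge whose removal increases the number of
strongly connected components, i.e. it separates some strongly connected pair. -/
def IsStrongBridge (G : V → V → Prop) (a b : V) : Prop :=
  G a b ∧ ∃ x y, SConn G x y ∧ ¬ SConn (DelEdge G a b) x y

/-- `u` is a strong articulation point: removing it increases the number of strongly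
connected components, i.e. it separates some strongly connected pair of other vertices. -/
def IsStrongArticulationPoint (G : V → V → Prop) (u : V) : Prop :=
  ∃ x y, x ≠ u ∧ y ≠ u ∧ SConn G x y ∧ ¬ SConn (DelVertex G u) x y

/-- The reverse digraph. -/
def Rev (G : V → V → Prop) : V → V → Prop := fun x y => G y x

/-- `u` dominates `v` in the flow graph `G_s`; equivalently, `u` is an ancestor of `v`
(and `v` a descendant of `u`) in the dominator tree of `G_s`. -/
def Dom (G : V → V → Prop) (s u v : V) : Prop :=
  ∀ p, IsWalk G s v p → u ∈ p

/-- `u` is the immediate dominator of `v` in `G_s` (the parent of `v` in the dominator tree). -/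
def Idom (G : V → V → Prop) (s u v : V) : Prop :=
  u ≠ v ∧ Dom G s u v ∧ ∀ w, w ≠ v → Dom G s w v → Dom G s w u

/-- Edge `(a,b)` is a bridge of the flow graph `G_s`: every walk from `s` to `b` uses it. -/
def IsBridge (G : V → V → Prop) (s a b : V) : Prop :=
  G a b ∧ ∀ p, IsWalk G s b p → EdgeOn a b p

/-- `r` is the head of some bridge of `G_s`, i.e. a non-`s` root in the bridge
decomposition of the dominator tree. -/
def IsBridgeHead (G : V → V → Prop) (s r : V) : Prop :=
  ∃ a, IsBridge G s a r

/-- `r` is the root of the tree containing `x` in the bridge decomposition of the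
dominator tree of `G_s`: `r` dominates `x`, `r` is `s` or a bridge head, and every
bridge head dominating `x` dominates `r`. -/
def IsBDRoot (G : V → V → Prop) (s r x : V) : Prop :=
  Dom G s r x ∧ (r = s ∨ IsBridgeHead G s r) ∧
    ∀ z, Dom G s z x → IsBridgeHead G s z → Dom G s z r

/-- A depth-first search tree of `G` rooted at `s`, given by a parent function and a
preorder numbering. -/
structure DFSTree (G : V → V → Prop) (s : V) where
  parent : V → V
  pre : V → ℕ
  parent_root : parent s = s
  parent_edge : ∀ v, v ≠ s → G (parent v) v
  root_reach : ∀ v, ∃ n, parent^[n] v = s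
  pre_inj : Function.Injective pre
  pre_parent : ∀ v, v ≠ s → pre (parent v) < pre v
  /-- Descendants of a vertex form a contiguous interval in preorder. -/
  interval : ∀ u v w, (∃ n, parent^[n] w = u) → pre u ≤ pre v → pre v ≤ pre w →
      ∃ n, parent^[n] v = u
  /-- The defining property of depth-first search trees: every edge going forward
  in preorder goes to a descendant. -/
  dfs_edge : ∀ u v, G u v → pre u < pre v → ∃ n, parent^[n] v = u

/-- `u` is an ancestor of `v` in the tree `T` (every vertex is an ancestor of itself). -/
def DFSTree.Anc {G : V → V → Prop} {s : V} (T : DFSTree G s) (u v : V) : Prop :=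
  ∃ n, T.parent^[n] v = u

/-- `x ∈ loop(u)` with respect to the tree-ancestor relation `tanc`: `x` is a descendant
of `u` and there is a walk from `x` to `u` using only descendants of `u`. -/
def InLoop (G : V → V → Prop) (tanc : V → V → Prop) (u x : V) : Prop :=
  tanc u x ∧ ∃ p, IsWalk G x u p ∧ ∀ y ∈ p, tanc u y

/-- `hp` is the parent function of the loop nesting tree of `G_s` with respect to the
DFS-tree ancestor relation `tanc`: `hp x` is the nearest proper ancestor `u` of `x`
in the DFS tree with `x ∈ loop(u)`. -/
def IsLoopParent (G : V → V → Prop) (s : V) (tanc : V → V → Prop) (hp : V → V) : Prop :=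
  hp s = s ∧ ∀ x, x ≠ s →
    (tanc (hp x) x ∧ hp x ≠ x ∧ InLoop G tanc (hp x) x ∧
      ∀ u, tanc u x → u ≠ x → InLoop G tanc u x → tanc u (hp x))

/-- `u` is an ancestor of `v` in the loop nesting tree with parent function `hp`. -/
def HAnc (hp : V → V) (u v : V) : Prop := ∃ n, hp^[n] v = u

/-- `w` is the nearest common ancestor of `x` and `y` in the loop nesting tree
with parent function `hp`. -/
def HNca (hp : V → V) (x y w : V) : Prop :=
  HAnc hp w x ∧ HAnc hp w y ∧ ∀ z, HAnc hp z x → HAnc hp z y → HAnc hp z w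

/-- `u` is a nontrivial dominator of `G_s`: `u ≠ s` and `u` is not a leaf of the
dominator tree (it properly dominates some vertex). -/
def NontrivialDom (G : V → V → Prop) (s u : V) : Prop :=
  u ≠ s ∧ ∃ w, w ≠ u ∧ Dom G s u w

/-- `a` and `b` are siblings in the dominator tree of `G_s`. -/
def SiblingInD (G : V → V → Prop) (s a b : V) : Prop :=
  a ≠ b ∧ ∃ w, Idom G s w a ∧ Idom G s w b

/-- Given the bridge-decomposition root function `r` and loop-nesting parent `hp`,
`z` is a boundary vertex. -/
def Boundary (s : V) (r hp : V → V) (z : V) : Prop := z = s ∨ r (hp z) ≠ r z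

/-- `z` is the nearest boundary ancestor of `x` in the loop nesting tree. -/
def IsNearestBoundary (s : V) (r hp : V → V) (x z : V) : Prop :=
  HAnc hp z x ∧ Boundary s r hp z ∧
    ∀ z', HAnc hp z' x → Boundary s r hp z' → HAnc hp z' z

/-- `x` and `y` are 2-edge-connected: no single edge deletion leaves them in
different strongly connected components. -/
def TwoEdgeConnected (G : V → V → Prop) (x y : V) : Prop :=
  ∀ a b, G a b → SConn (DelEdge G a b) x y

/-! Let `x` and `y` be separated by deleting `(u,v)`, say `x` no longer reaches `y`. Every
`x`-`y` walk of `G` then uses `(u,v)`, so after the deletion `x` still reaches `u` and `v` still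
reaches `y`. If `x` still reaches `s`, a walk from `s` to `v` avoiding `(u,v)`, or one from `s`
to `y` avoiding `v`, would reconnect `x` to `y`: so `(u,v)` is a bridge of `G_s` and `v`
dominates `y`. If `x` no longer reaches `s`, the same argument in the reverse graph, where `u`
still reaches `x` but `s` no longer does, makes `(v,u)` a bridge of `G_s^R` with `u`
dominating `x`. -/

theorem reach_iff_reflTransGen {G : V → V → Prop} {a b : V} :
    Reach G a b ↔ Relation.ReflTransGen G a b := by
  constructor
  · rintro ⟨p, hc, hh, hl⟩
    have hne : p ≠ [] := by rintro rfl; simp at hh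
    rw [List.head?_eq_some_head hne, Option.some.injEq] at hh
    rw [List.getLast?_eq_some_getLast hne, Option.some.injEq] at hl
    exact hh ▸ hl ▸ List.relationReflTransGen_of_exists_isChain p hc hne
  · intro h
    obtain ⟨p, hne, hc, hh, hl⟩ := List.exists_isChain_ne_nil_of_relationReflTransGen h
    exact ⟨p, hc, hh ▸ List.head?_eq_some_head hne, hl ▸ List.getLast?_eq_some_getLast hne⟩

theorem Reach.refl (G : V → V → Prop) (a : V) : Reach G a a :=
  reach_iff_reflTransGen.2 .refl

theorem Reach.trans {G : V → V → Prop} {a b c : V} (hab : Reach G a b) (hbc : Reach G b c) :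
    Reach G a c :=
  reach_iff_reflTransGen.2 ((reach_iff_reflTransGen.1 hab).trans (reach_iff_reflTransGen.1 hbc))

theorem reach_rev_iff {G : V → V → Prop} {a b : V} : Reach (Rev G) a b ↔ Reach G b a := by
  simp only [reach_iff_reflTransGen]
  exact Relation.reflTransGen_swap (r := G)

theorem delEdge_rev (G : V → V → Prop) (u v : V) :
    DelEdge (Rev G) v u = Rev (DelEdge G u v) := by
  funext a b
  simp only [DelEdge, Rev, and_comm]

theorem delEdge_eq_self {G : V → V → Prop} {u v : V} (h : ¬ G u v) : DelEdge G u v = G := by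
  ext a b
  simp only [DelEdge, and_iff_left_iff_imp]
  rintro hab ⟨rfl, rfl⟩
  exact h hab

theorem not_edgeOn_of_not_mem {u v : V} {p : List V} (hv : v ∉ p) : ¬ EdgeOn u v p :=
  fun h => hv (List.mem_of_mem_tail (List.of_mem_zip h).2)

theorem isChain_delEdge {G : V → V → Prop} {u v : V} {p : List V} (hc : p.IsChain G)
    (he : ¬ EdgeOn u v p) : p.IsChain (DelEdge G u v) := by
  induction hc with
  | nil => exact .nil
  | singleton a => exact .singleton a
  | @cons_cons a b t hab _ ih =>
    simp only [EdgeOn, List.tail_cons, List.zip_cons_cons, List.mem_cons, Prod.mk.injEq,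
      not_or] at he
    exact .cons_cons ⟨hab, fun ⟨hau, hbv⟩ => he.1 ⟨hau.symm, hbv.symm⟩⟩ (ih he.2)

theorem IsWalk.delEdge {G : V → V → Prop} {u v a b : V} {p : List V} (hp : IsWalk G a b p)
    (he : ¬ EdgeOn u v p) : IsWalk (DelEdge G u v) a b p :=
  ⟨isChain_delEdge hp.1 he, hp.2⟩

theorem Reach.delEdge_or {G : V → V → Prop} {u v x y : V} (h : Reach G x y) :
    Reach (DelEdge G u v) x y ∨ (Reach (DelEdge G u v) x u ∧ Reach (DelEdge G u v) v y) := by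
  simp only [reach_iff_reflTransGen] at h ⊢
  induction h using Relation.ReflTransGen.head_induction_on with
  | refl => exact .inl .refl
  | @head a c hac _ ih =>
    by_cases hedge : a = u ∧ c = v
    · obtain ⟨rfl, rfl⟩ := hedge
      exact .inr ⟨.refl, ih.elim id And.right⟩
    · exact ih.imp (.head ⟨hac, hedge⟩) (And.imp_left (.head ⟨hac, hedge⟩))

theorem isBridge_and_dom_of_not_reach_delEdge {G : V → V → Prop} {s u v x y : V} (huv : G u v)
    (hxy : ¬ Reach (DelEdge G u v) x y) (hxs : Reach (DelEdge G u v) x s)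
    (hvy : Reach (DelEdge G u v) v y) : IsBridge G s u v ∧ Dom G s v y := by
  refine ⟨⟨huv, fun p hp => ?_⟩, fun p hp => ?_⟩
  · by_contra he
    exact hxy (hxs.trans (Reach.trans ⟨p, hp.delEdge he⟩ hvy))
  · by_contra hv
    exact hxy (hxs.trans ⟨p, hp.delEdge (not_edgeOn_of_not_mem hv)⟩)

theorem isBridge_and_dom_or_rev_of_not_reach_delEdge {G : V → V → Prop}
    (hG : StronglyConnected G) {u v x y : V} (huv : G u v) (hxy : ¬ Reach (DelEdge G u v) x y)
    (s : V) :
    (IsBridge G s u v ∧ Dom G s v y) ∨ (IsBridge (Rev G) s v u ∧ Dom (Rev G) s u x) := by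
  obtain ⟨hxu, hvy⟩ := (hG x y).delEdge_or.resolve_left hxy
  by_cases hxs : Reach (DelEdge G u v) x s
  · exact .inl (isBridge_and_dom_of_not_reach_delEdge huv hxy hxs hvy)
  · refine .inr (isBridge_and_dom_of_not_reach_delEdge huv ?_ (Reach.refl _ s) ?_)
    · rwa [delEdge_rev, reach_rev_iff]
    · rwa [delEdge_rev, reach_rev_iff]

theorem stmt10_general (G : V → V → Prop) (hG : StronglyConnected G) (s u v x y : V)
    (hsep : ¬ SConn (DelEdge G u v) x y) :
    (IsBridge G s u v ∧ (Dom G s v x ∨ Dom G s v y)) ∨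
      (IsBridge (Rev G) s v u ∧ (Dom (Rev G) s u x ∨ Dom (Rev G) s u y)) := by
  have huv : G u v := by
    by_contra h
    rw [delEdge_eq_self h] at hsep
    exact hsep ⟨hG x y, hG y x⟩
  rcases not_and_or.1 hsep with hxy | hyx
  · rcases isBridge_and_dom_or_rev_of_not_reach_delEdge hG huv hxy s with ⟨hb, hd⟩ | ⟨hb, hd⟩
    · exact .inl ⟨hb, .inr hd⟩
    · exact .inr ⟨hb, .inl hd⟩
  · rcases isBridge_and_dom_or_rev_of_not_reach_delEdge hG huv hyx s with ⟨hb, hd⟩ | ⟨hb, hd⟩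
    · exact .inl ⟨hb, .inl hd⟩
    · exact .inr ⟨hb, .inr hd⟩

/-- If a strong bridge `(u,v)` separates `x` and `y`, then it lies on one of the
dominator-tree paths `D[s,x]`, `D[s,y]`, `D^R[s,x]`, `D^R[s,y]`. -/
theorem stmt10 (G : V → V → Prop) (hG : StronglyConnected G) (s u v x y : V)
    (hsb : IsStrongBridge G u v)
    (hsep : ¬ SConn (DelEdge G u v) x y) :
    (IsBridge G s u v ∧ (Dom G s v x ∨ Dom G s v y)) ∨
      (IsBridge (Rev G) s v u ∧ (Dom (Rev G) s u x ∨ Dom (Rev G) s u y)) :=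
  stmt10_general G hG s u v x y hsep

end StrongConn
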